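/- arXiv:0812.2649 — 3 statements merged into one kernel-verified Lean document; each statement's English description precedes it below -/
import Mathlib

section
/- Let G be a finite abelian group and let C be a set of characters χ : G → ℂ^× which is stable under the action of field automorphisms of ℂ, i.e. for every ring automorphism α : ℂ ≃+* ℂ and every χ ∈ C, the character g ↦ α(χ(g)) also lies in C. Then the element E_C = ∑_{χ∈C} e_χ of ℂ[G] is idempotent (E_C * E_C = E_C) and all of its coefficients are rational numbers, i.e. E_C lies in the image of ℚ[G] in ℂ[G]. -/
open MonoidAlgebra

/-- The idempotent `e_χ = (1/|G|) ∑_{g ∈ G} χ(g)⁻¹ · g` of the group algebra `ℂ[G]`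
attached to a character `χ : G → ℂˣ` of a finite abelian group `G`. -/
noncomputable def charIdem {G : Type*} [CommGroup G] [Fintype G] (χ : G →* ℂˣ) :
    MonoidAlgebra ℂ G :=
  (Fintype.card G : ℂ)⁻¹ • ∑ g : G, MonoidAlgebra.single g (((χ g)⁻¹ : ℂˣ) : ℂ)

/-- The character `g ↦ α (χ g)` obtained from `χ` by applying a field automorphism
`α` of `ℂ`. -/
noncomputable def charMap {G : Type*} [CommGroup G] (α : ℂ ≃+* ℂ) (χ : G →* ℂˣ) :
    G →* ℂˣ :=
  (Units.map (α : ℂ →+* ℂ).toMonoidHom).comp χ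

/-! ### Extending automorphisms of subfields of `ℂ` to automorphisms of `ℂ` -/

/-- A type synonym for `ℂ`, to carry a twisted `Algebra` structure. -/
def CCopy : Type := ℂ

noncomputable instance : Field CCopy := inferInstanceAs (Field ℂ)
instance : IsAlgClosed CCopy := inferInstanceAs (IsAlgClosed ℂ)

/-- The identity, as a ring isomorphism `ℂ ≃+* CCopy`. -/
def toCCopy : ℂ ≃+* CCopy := RingEquiv.refl ℂ

/-- Two algebraically closed fields with transcendence bases over `K` indexed by the same
type are isomorphic over `K`. -/
theorem exists_algClosed_ringEquiv_commutes (K : Type*) [Field K]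
    (C1 C2 : Type*) [Field C1] [Field C2] [Algebra K C1] [Algebra K C2]
    [IsAlgClosed C1] [IsAlgClosed C2]
    {ι : Type*} {v : ι → C1} {w : ι → C2}
    (hv : IsTranscendenceBasis K v) (hw : IsTranscendenceBasis K w) :
    ∃ α : C1 ≃+* C2, ∀ x : K, α (algebraMap K C1 x) = algebraMap K C2 x := by
  letI := IsAlgClosed.isAlgClosure_of_transcendence_basis v hv
  letI := IsAlgClosed.isAlgClosure_of_transcendence_basis w hw
  let e : Algebra.adjoin K (Set.range v) ≃+* Algebra.adjoin K (Set.range w) :=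
    (hv.1.aevalEquiv.symm.trans hw.1.aevalEquiv).toRingEquiv
  refine ⟨IsAlgClosure.equivOfEquiv C1 C2 e, fun x => ?_⟩
  rw [IsScalarTower.algebraMap_apply K (Algebra.adjoin K (Set.range v)) C1 x,
    IsAlgClosure.equivOfEquiv_algebraMap]
  have h2 : e (algebraMap K (Algebra.adjoin K (Set.range v)) x)
      = algebraMap K (Algebra.adjoin K (Set.range w)) x :=
    (hv.1.aevalEquiv.symm.trans hw.1.aevalEquiv).commutes x
  rw [h2, ← IsScalarTower.algebraMap_apply]

/-- Every automorphism of a subfield of `ℂ` extends to an automorphism of `ℂ`. -/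
theorem exists_ringEquiv_complex_extends (K : Type*) [Field K] [Algebra K ℂ] (σ : K ≃+* K) :
    ∃ α : ℂ ≃+* ℂ, ∀ x : K, α (algebraMap K ℂ x) = algebraMap K ℂ (σ x) := by
  obtain ⟨ι, v, hv⟩ := exists_isTranscendenceBasis' K ℂ
  letI : Algebra K CCopy :=
    ((toCCopy : ℂ →+* CCopy).comp ((algebraMap K ℂ).comp (σ : K →+* K))).toAlgebra
  have halg : ∀ x : K, algebraMap K CCopy x = toCCopy (algebraMap K ℂ (σ x)) := fun _ => rfl
  have hcomp : (algebraMap K CCopy).comp (σ.symm : K →+* K) =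
      (toCCopy : ℂ →+* CCopy).comp (algebraMap K ℂ) := by
    ext x
    show toCCopy (algebraMap K ℂ (σ (σ.symm x))) = toCCopy (algebraMap K ℂ x)
    rw [σ.apply_symm_apply]
  have hw1 : AlgebraicIndependent K (⇑toCCopy ∘ v) :=
    hv.1.ringHom_of_comp_eq σ.symm toCCopy σ.symm.surjective toCCopy.injective hcomp
  have hw : IsTranscendenceBasis K (⇑toCCopy ∘ v) := by
    rw [hw1.isTranscendenceBasis_iff]
    intro κ u hu j hj
    have hu' : AlgebraicIndependent K (⇑toCCopy.symm ∘ u) := by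
      refine AlgebraicIndependent.of_ringHom_of_comp_eq (f := σ.symm) (g := toCCopy)
        (x := ⇑toCCopy.symm ∘ u) ?_ σ.symm.injective hcomp
      have : ⇑toCCopy ∘ (⇑toCCopy.symm ∘ u) = u := by
        funext i; exact toCCopy.apply_symm_apply (u i)
      rw [this]
      exact hu
    have hj' : (⇑toCCopy.symm ∘ u) ∘ j = v := by
      funext i
      have := congrFun hj i
      simp only [Function.comp_apply] at this ⊢
      rw [this]
      exact toCCopy.symm_apply_apply (v i)
    exact (hv.1.isTranscendenceBasis_iff.mp hv) κ (⇑toCCopy.symm ∘ u) hu' j hj'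
  obtain ⟨α', hα'⟩ := exists_algClosed_ringEquiv_commutes K ℂ CCopy hv hw
  refine ⟨α'.trans toCCopy.symm, fun x => ?_⟩
  show toCCopy.symm (α' (algebraMap K ℂ x)) = _
  rw [hα' x, halg x, toCCopy.symm_apply_apply]

/-- A complex number in the image of a finite Galois extension of `ℚ` which is fixed by all
automorphisms of `ℂ` is rational. -/
theorem exists_rat_of_fixed {L : Type} [Field L] [Algebra ℚ L] [FiniteDimensional ℚ L]
    [IsGalois ℚ L] (φ : L →ₐ[ℚ] ℂ) (z : ℂ) (hz : ∀ α : ℂ ≃+* ℂ, α z = z)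
    (hmem : z ∈ φ.fieldRange) : ∃ q : ℚ, z = (q : ℂ) := by
  obtain ⟨w, hw0⟩ := hmem
  have hw : φ w = z := hw0
  have hinj : Function.Injective φ := φ.toRingHom.injective
  let e : L ≃ₐ[ℚ] φ.fieldRange := AlgEquiv.ofInjectiveField φ
  have hcoe : ∀ x : L, (algebraMap φ.fieldRange ℂ) (e x) = φ x := by
    intro x; rfl
  have hfix : ∀ τ : L ≃ₐ[ℚ] L, τ w = w := by
    intro τ
    let σ : φ.fieldRange ≃+* φ.fieldRange := (e.symm.trans (τ.trans e)).toRingEquiv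
    obtain ⟨α, hα⟩ := exists_ringEquiv_complex_extends φ.fieldRange σ
    have h2 : φ (τ w) = α (φ w) := by
      have h3 := hα (e w)
      rw [hcoe w] at h3
      have h4 : σ (e w) = e (τ w) := by
        show e (τ (e.symm (e w))) = e (τ w)
        rw [e.symm_apply_apply]
      rw [h4, hcoe (τ w)] at h3
      exact h3.symm
    rw [hw, hz α, ← hw] at h2
    exact hinj h2
  have hbot : w ∈ (⊥ : IntermediateField ℚ L) := by
    have h := ((IsGalois.tfae (F := ℚ) (E := L)).out 0 1).mp (inferInstance : IsGalois ℚ L)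
    rw [← h]
    exact fun g => hfix g.1
  obtain ⟨q, hq⟩ := IntermediateField.mem_bot.mp hbot
  refine ⟨q, ?_⟩
  rw [← hw, ← hq]
  rw [φ.commutes q]
  exact eq_ratCast (algebraMap ℚ ℂ) q

/-! ### Orthogonality of characters and idempotency -/

section Chars

variable {G : Type*} [CommGroup G] [Fintype G]

/-- Orthogonality of characters. -/
lemma sum_char_orth (χ ψ : G →* ℂˣ) [Decidable (ψ = χ)] :
    ∑ g : G, ((((χ g)⁻¹ : ℂˣ) : ℂ) * ((ψ g : ℂˣ) : ℂ))
      = if ψ = χ then (Fintype.card G : ℂ) else 0 := by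
  classical
  have h1 : ∀ g : G, (((χ g)⁻¹ : ℂˣ) : ℂ) * ((ψ g : ℂˣ) : ℂ)
      = ((Units.coeHom ℂ).comp (ψ / χ)) g := by
    intro g
    simp [div_eq_mul_inv, mul_comm]
  simp_rw [h1]
  rw [sum_hom_units ((Units.coeHom ℂ).comp (ψ / χ))]
  have hiff : ((Units.coeHom ℂ).comp (ψ / χ) = 1) ↔ ψ = χ := by
    constructor
    · intro h
      have : ψ / χ = 1 := by
        ext g
        have := congrArg (fun f => f g) h
        simpa [Units.ext_iff] using this
      exact div_eq_one.mp this
    · rintro rfl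
      ext g
      simp
  by_cases h : ψ = χ
  · rw [if_pos (hiff.mpr h), if_pos h]
  · rw [if_neg (fun hh => h (hiff.mp hh)), if_neg h, Nat.cast_zero]

lemma charIdem_mul (χ ψ : G →* ℂˣ) :
    charIdem χ * charIdem ψ = if ψ = χ then charIdem χ else 0 := by
  classical
  have hn : (Fintype.card G : ℂ) ≠ 0 := Nat.cast_ne_zero.mpr Fintype.card_ne_zero
  have key : (∑ g : G, MonoidAlgebra.single g (((χ g)⁻¹ : ℂˣ) : ℂ)) *
      (∑ h : G, MonoidAlgebra.single h (((ψ h)⁻¹ : ℂˣ) : ℂ))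
      = (if ψ = χ then (Fintype.card G : ℂ) else 0) •
          ∑ k : G, MonoidAlgebra.single k (((ψ k)⁻¹ : ℂˣ) : ℂ) := by
    rw [Finset.sum_mul_sum]
    simp_rw [MonoidAlgebra.single_mul_single]
    have inner : ∀ g : G,
        (∑ h : G, MonoidAlgebra.single (g * h)
          ((((χ g)⁻¹ : ℂˣ) : ℂ) * (((ψ h)⁻¹ : ℂˣ) : ℂ)))
        = ∑ k : G, MonoidAlgebra.single k
          (((((χ g)⁻¹ * ψ g) : ℂˣ) : ℂ) * (((ψ k)⁻¹ : ℂˣ) : ℂ)) := by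
      intro g
      refine Fintype.sum_bijective (fun h => g * h) (Group.mulLeft_bijective g) _ _ (fun h => ?_)
      have hu : ((χ g)⁻¹ : ℂˣ) * (ψ h)⁻¹ = ((χ g)⁻¹ * ψ g) * (ψ (g * h))⁻¹ := by
        rw [map_mul, mul_inv, mul_assoc, mul_inv_cancel_left]
      congr 1
      rw [← Units.val_mul, hu, Units.val_mul]
    rw [Finset.sum_congr rfl (fun g _ => inner g), Finset.sum_comm]
    have hs : ∀ (k : G) (f : G → ℂ), ∑ x, MonoidAlgebra.single k (f x) = MonoidAlgebra.single k (∑ x, f x) :=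
      fun k f => (map_sum (MonoidAlgebra.singleAddHom k) f Finset.univ).symm
    rw [Finset.sum_congr rfl (fun k _ => hs k _)]
    have hcoeff : ∀ k : G,
        (∑ g : G, ((((χ g)⁻¹ * ψ g : ℂˣ)) : ℂ) * (((ψ k)⁻¹ : ℂˣ) : ℂ))
        = (if ψ = χ then (Fintype.card G : ℂ) else 0) * (((ψ k)⁻¹ : ℂˣ) : ℂ) := by
      intro k
      rw [← Finset.sum_mul]
      congr 1
      simp_rw [Units.val_mul]
      exact sum_char_orth χ ψ
    rw [Finset.sum_congr rfl (fun k _ => congrArg _ (hcoeff k))]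
    rw [Finset.smul_sum]
    exact Finset.sum_congr rfl (fun k _ => (MonoidAlgebra.smul_single' _ _ _).symm)
  unfold charIdem
  rw [smul_mul_smul_comm, key, smul_smul]
  by_cases h : ψ = χ
  · subst h
    rw [if_pos rfl, if_pos rfl]
    congr 1
    field_simp
  · rw [if_neg h, if_neg h, mul_zero, zero_smul]

omit [Fintype G] in
lemma charMap_symm_charMap (α : ℂ ≃+* ℂ) (χ : G →* ℂˣ) :
    charMap α.symm (charMap α χ) = χ := by
  ext g
  simp [charMap]

lemma sum_charIdem_apply (C : Finset (G →* ℂˣ)) (g : G) :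
    (∑ χ ∈ C, charIdem χ).coeff g = (Fintype.card G : ℂ)⁻¹ * ∑ χ ∈ C, (((χ g)⁻¹ : ℂˣ) : ℂ) := by
  classical
  rw [Finset.mul_sum, MonoidAlgebra.coeff_sum, Finsupp.finset_sum_apply]
  refine Finset.sum_congr rfl (fun χ _ => ?_)
  show ((Fintype.card G : ℂ)⁻¹ • ∑ h : G, MonoidAlgebra.single h (((χ h)⁻¹ : ℂˣ) : ℂ)).coeff g
      = _
  rw [MonoidAlgebra.coeff_smul, Finsupp.smul_apply, MonoidAlgebra.coeff_sum, Finsupp.finset_sum_apply, smul_eq_mul]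
  congr 1
  simp [MonoidAlgebra.coeff_single, Finsupp.single_apply]

lemma fixed_coeff (C : Finset (G →* ℂˣ))
    (hC : ∀ (α : ℂ ≃+* ℂ), ∀ χ ∈ C, charMap α χ ∈ C) (α : ℂ ≃+* ℂ) (g : G) :
    α ((∑ χ ∈ C, charIdem χ).coeff g) = (∑ χ ∈ C, charIdem χ).coeff g := by
  classical
  rw [sum_charIdem_apply, map_mul, map_inv₀, map_natCast, map_sum]
  congr 1
  refine Finset.sum_nbij' (charMap α) (charMap α.symm) (fun χ hχ => hC α χ hχ)
    (fun χ hχ => hC α.symm χ hχ) (fun χ _ => charMap_symm_charMap α χ)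
    (fun χ _ => by
      conv_lhs => rw [← RingEquiv.symm_symm α]
      exact charMap_symm_charMap α.symm χ)
    (fun χ _ => ?_)
  simp [charMap, map_inv₀]

end Chars

theorem sum_charIdem_idempotent_and_rational {G : Type*} [CommGroup G] [Fintype G]
    (C : Finset (G →* ℂˣ))
    (hC : ∀ (α : ℂ ≃+* ℂ), ∀ χ ∈ C, charMap α χ ∈ C) :
    (∑ χ ∈ C, charIdem χ) * (∑ χ ∈ C, charIdem χ) = ∑ χ ∈ C, charIdem χ ∧
      ∃ E₀ : MonoidAlgebra ℚ G,
        Finsupp.mapRange (algebraMap ℚ ℂ) (map_zero _) E₀.coeff = (∑ χ ∈ C, charIdem χ).coeff := by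
  classical
  constructor
  · rw [Finset.sum_mul_sum]
    calc ∑ χ ∈ C, ∑ ψ ∈ C, charIdem χ * charIdem ψ
        = ∑ χ ∈ C, ∑ ψ ∈ C, if ψ = χ then charIdem χ else 0 :=
          Finset.sum_congr rfl fun χ _ => Finset.sum_congr rfl fun ψ _ => charIdem_mul χ ψ
      _ = ∑ χ ∈ C, charIdem χ := by
          refine Finset.sum_congr rfl fun χ hχ => ?_
          rw [Finset.sum_ite_eq' C χ (fun _ => charIdem χ), if_pos hχ]
  · have hrat : ∀ a : G, ∃ q : ℚ, (∑ χ ∈ C, charIdem χ).coeff a = (q : ℂ) := by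
      intro a
      have hnpos : 0 < Fintype.card G := Fintype.card_pos
      set n : ℕ+ := ⟨Fintype.card G, hnpos⟩ with hn
      haveI : NeZero ((n : ℕ)) := ⟨n.pos.ne'⟩
      let L := CyclotomicField n ℚ
      haveI : IsCyclotomicExtension {(n : ℕ)} ℚ L :=
        haveI : NeZero ((n : ℕ) : ℚ) := ⟨by exact_mod_cast n.pos.ne'⟩
        CyclotomicField.isCyclotomicExtension (n : ℕ) ℚ
      haveI : FiniteDimensional ℚ L := IsCyclotomicExtension.finiteDimensional {(n : ℕ)} ℚ L
      haveI : IsGalois ℚ L := IsCyclotomicExtension.isGalois {(n : ℕ)} ℚ L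
      haveI : Algebra.IsAlgebraic ℚ L := Algebra.IsAlgebraic.of_finite ℚ L
      let φ : L →ₐ[ℚ] ℂ := IsAlgClosed.lift
      have hζ := IsCyclotomicExtension.zeta_spec n ℚ L
      have hinj : Function.Injective φ := φ.toRingHom.injective
      have hξ : IsPrimitiveRoot (φ (IsCyclotomicExtension.zeta n ℚ L)) n :=
        hζ.map_of_injective hinj
      have hmemχ : ∀ χ : G →* ℂˣ, ((χ a : ℂˣ) : ℂ) ∈ φ.fieldRange := by
        intro χ
        have hpow : ((χ a : ℂˣ) : ℂ) ^ (n : ℕ) = 1 := by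
          have h1 : χ a ^ (n : ℕ) = 1 := by
            rw [← map_pow]
            show χ (a ^ Fintype.card G) = 1
            rw [pow_card_eq_one, map_one]
          rw [← Units.val_pow_eq_pow_val, h1, Units.val_one]
        obtain ⟨i, _, hi⟩ := hξ.eq_pow_of_pow_eq_one hpow
        rw [← hi]
        exact pow_mem (AlgHom.mem_fieldRange.mpr ⟨IsCyclotomicExtension.zeta n ℚ L, rfl⟩) i
      apply exists_rat_of_fixed φ
      · exact fun α => fixed_coeff C hC α a
      · rw [sum_charIdem_apply]
        refine mul_mem (inv_mem ?_) (sum_mem fun χ _ => ?_)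
        · exact natCast_mem φ.fieldRange (Fintype.card G)
        · rw [Units.val_inv_eq_inv_val]
          exact inv_mem (hmemχ χ)
    choose q hq using hrat
    refine ⟨MonoidAlgebra.ofCoeff (∑ a : G, Finsupp.single a (q a)), ?_⟩
    ext a
    rw [Finsupp.mapRange_apply, MonoidAlgebra.coeff_ofCoeff]
    have h1 : (∑ b : G, Finsupp.single b (q b)) a = q a := by
      rw [Finsupp.finset_sum_apply]
      simp [Finsupp.single_apply]
    rw [h1, hq a]
    exact eq_ratCast (algebraMap ℚ ℂ) (q a)
end

section
/- The splitting field K of X³ − 4X + 1 over ℚ is a totally real number field: every infinite place of K is real (equivalently, every field embedding of K into ℂ has image contained in ℝ). -/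
open Polynomial

lemma cubic_real_roots (z : ℂ) (hz : z ^ 3 - 4 * z + 1 = 0) : ∃ r : ℝ, z = r := by
  set p : ℝ[X] := X ^ 3 - 4 * X + 1 with hp
  have hdeg : p.natDegree = 3 := by rw [hp]; compute_degree!
  have hp0 : p ≠ 0 := fun h => by simp [h] at hdeg
  have hcont : ContinuousOn (fun x : ℝ => x ^ 3 - 4 * x + 1) (Set.univ) := by fun_prop
  obtain ⟨a, ha, ha0⟩ := intermediate_value_Icc (by norm_num : (-3:ℝ) ≤ -1)
    (hcont.mono (Set.subset_univ _)) (by norm_num : (0:ℝ) ∈ Set.Icc ((-3:ℝ)^3 - 4*(-3) + 1) ((-1:ℝ)^3 - 4*(-1) + 1))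
  obtain ⟨b, hb, hb0⟩ := intermediate_value_Icc' (by norm_num : (0:ℝ) ≤ 1)
    (hcont.mono (Set.subset_univ _)) (by norm_num : (0:ℝ) ∈ Set.Icc ((1:ℝ)^3 - 4*1 + 1) ((0:ℝ)^3 - 4*0 + 1))
  obtain ⟨c, hc, hc0⟩ := intermediate_value_Icc (by norm_num : (1:ℝ) ≤ 2)
    (hcont.mono (Set.subset_univ _)) (by norm_num : (0:ℝ) ∈ Set.Icc ((1:ℝ)^3 - 4*1 + 1) ((2:ℝ)^3 - 4*2 + 1))
  simp only [Set.mem_Icc] at ha hb hc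
  have hb1 : b ≠ 1 := fun h => by rw [h] at hb0; norm_num at hb0
  have hc1 : c ≠ 1 := fun h => by rw [h] at hc0; norm_num at hc0
  have hab : a ≠ b := by intro h; subst h; linarith [ha.2, hb.1]
  have hac : a ≠ c := by intro h; subst h; linarith [ha.2, hc.1]
  have hbc : b ≠ c := by
    intro h; subst h
    exact hb1 (le_antisymm hb.2 hc.1)
  have hroot : ∀ x : ℝ, x ^ 3 - 4 * x + 1 = 0 → x ∈ p.roots := by
    intro x hx
    rw [mem_roots hp0]
    simp [p, IsRoot, hx]
  have hsub : ({a, b, c} : Finset ℝ) ⊆ p.roots.toFinset := by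
    intro x hx
    simp only [Finset.mem_insert, Finset.mem_singleton] at hx
    rw [Multiset.mem_toFinset]
    rcases hx with rfl | rfl | rfl
    exacts [hroot _ ha0, hroot _ hb0, hroot _ hc0]
  have hcard3 : ({a, b, c} : Finset ℝ).card = 3 := by
    rw [Finset.card_insert_of_notMem (by simp [hab, hac]),
        Finset.card_insert_of_notMem (by simp [hbc])]
    simp
  have hge : 3 ≤ Multiset.card p.roots :=
    hcard3 ▸ (Finset.card_le_card hsub).trans (p.roots.toFinset_card_le)
  have hle : Multiset.card p.roots ≤ 3 := hdeg ▸ p.card_roots'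
  have hsplit : p.Splits :=
    (Polynomial.splits_iff_card_roots).mpr (by omega)
  have hmaproots := hsplit.roots_map (Complex.ofRealHom)
  have hz' : z ∈ (p.map Complex.ofRealHom).roots := by
    rw [mem_roots ((Polynomial.map_ne_zero_iff Complex.ofRealHom.injective).mpr hp0)]
    simp [p, IsRoot, hz]
  rw [hmaproots] at hz'
  obtain ⟨r, hr, hrz⟩ := Multiset.mem_map.mp hz'
  exact ⟨r, hrz.symm⟩

lemma emb_real (φ : (X ^ 3 - 4 * X + 1 : ℚ[X]).SplittingField →+* ℂ)
    (z : (X ^ 3 - 4 * X + 1 : ℚ[X]).SplittingField) : ∃ r : ℝ, φ z = (r : ℂ) := by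
  let f : ℚ[X] := X ^ 3 - 4 * X + 1
  let S : Subalgebra ℚ f.SplittingField :=
    { carrier := {z | ∃ r : ℝ, φ z = (r : ℂ)}
      add_mem' := by rintro x y ⟨r, hr⟩ ⟨s, hs⟩; exact ⟨r + s, by push_cast [map_add, hr, hs]; ring⟩
      mul_mem' := by rintro x y ⟨r, hr⟩ ⟨s, hs⟩; exact ⟨r * s, by push_cast [map_mul, hr, hs]; ring⟩
      algebraMap_mem' := fun q => ⟨(q : ℝ), by
        rw [show (algebraMap ℚ f.SplittingField q) = (q : f.SplittingField) from rfl,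
          map_ratCast]; push_cast; ring⟩ }
  have htop : Algebra.adjoin ℚ (f.rootSet f.SplittingField) = ⊤ :=
    Polynomial.SplittingField.adjoin_rootSet f
  have hle : Algebra.adjoin ℚ (f.rootSet f.SplittingField) ≤ S := by
    rw [Algebra.adjoin_le_iff]
    intro x hx
    have hx0 : aeval x f = 0 := (mem_rootSet.mp hx).2
    have : x ^ 3 - 4 * x + 1 = 0 := by
      simpa [f, map_ofNat] using hx0
    have hz : (φ x) ^ 3 - 4 * (φ x) + 1 = 0 := by
      have := congrArg φ this
      push_cast [map_add, map_sub, map_mul, map_pow, map_one, map_ofNat] at this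
      simpa using this
    obtain ⟨r, hr⟩ := cubic_real_roots (φ x) hz
    exact ⟨r, hr⟩
  have hz : z ∈ S := by
    have : z ∈ (⊤ : Subalgebra ℚ f.SplittingField) := trivial
    exact hle (htop ▸ this)
  obtain ⟨r, hr⟩ := hz
  exact ⟨r, hr⟩

theorem splittingField_totallyReal :
    (∀ v : NumberField.InfinitePlace (X ^ 3 - 4 * X + 1 : ℚ[X]).SplittingField, v.IsReal) ∧
      ∀ (φ : (X ^ 3 - 4 * X + 1 : ℚ[X]).SplittingField →+* ℂ)
        (z : (X ^ 3 - 4 * X + 1 : ℚ[X]).SplittingField), ∃ r : ℝ, φ z = (r : ℂ) := by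
  refine ⟨fun v => ?_, emb_real⟩
  rw [NumberField.InfinitePlace.isReal_iff, NumberField.ComplexEmbedding.isReal_iff]
  ext z
  obtain ⟨r, hr⟩ := emb_real v.embedding z
  simp [NumberField.ComplexEmbedding.conjugate, hr, Complex.conj_ofReal]
end

section
/- Let K be the splitting field of X³ − 4X + 1 over ℚ, let y ∈ K satisfy y² = 229, and let k = ℚ(y) ⊆ K. Then the extension K/k is unramified at every finite place: for every nonzero prime ideal p of the ring of integers 𝓞_k and every prime ideal P of 𝓞_K lying over p, the ramification index of P over p equals 1. -/
open Polynomial NumberField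

/-- The splitting field `K` of `X³ - 4X + 1` over `ℚ`. -/
def SplF : Type := (X ^ 3 - 4 * X + 1 : ℚ[X]).SplittingField

noncomputable instance : Field SplF :=
  inferInstanceAs (Field (X ^ 3 - 4 * X + 1 : ℚ[X]).SplittingField)

noncomputable instance : Algebra ℚ SplF :=
  inferInstanceAs (Algebra ℚ (X ^ 3 - 4 * X + 1 : ℚ[X]).SplittingField)

lemma cubic_int_monic : ((X:ℤ[X]) ^ 3 - 4 * X + 1).Monic := by monicity!
lemma sq229_monic : ((X:ℤ[X]) ^ 2 - 229).Monic := by monicity!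

/-- no rational root of the cubic -/
lemma cubic_no_rat_root (r : ℚ) : r ^ 3 - 4 * r + 1 ≠ 0 := by
  intro h
  have hint : IsIntegral ℤ r := by
    refine ⟨X ^ 3 - 4 * X + 1, cubic_int_monic, ?_⟩
    · simp only [eval₂_add, eval₂_sub, eval₂_pow, eval₂_mul, eval₂_X, eval₂_one,
        eval₂_ofNat]
      push_cast
      linear_combination h
  obtain ⟨m, hm⟩ := IsIntegrallyClosed.isIntegral_iff.mp hint
  have hm' : (m : ℚ) ^ 3 - 4 * m + 1 = 0 := by
    rw [show ((m : ℤ) : ℚ) = r from hm] at *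
    exact h
  have hmz : m ^ 3 - 4 * m + 1 = 0 := by exact_mod_cast hm'
  have hdvd : m ∣ 1 := ⟨4 - m ^ 2, by linear_combination hmz⟩
  rcases Int.isUnit_iff.mp (isUnit_of_dvd_one hdvd) with h1 | h1 <;> rw [h1] at hmz <;> norm_num at hmz

lemma no_rat_sqrt_229 (q : ℚ) : q ^ 2 ≠ 229 := by
  intro h
  have hint : IsIntegral ℤ q := by
    refine ⟨X ^ 2 - 229, sq229_monic, ?_⟩
    · simp only [eval₂_sub, eval₂_pow, eval₂_X, eval₂_ofNat]
      push_cast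
      linear_combination h
  obtain ⟨m, hm⟩ := IsIntegrallyClosed.isIntegral_iff.mp hint
  have hmz : m ^ 2 = 229 := by
    have hm' : (m : ℚ) ^ 2 = 229 := by rw [show ((m : ℤ) : ℚ) = q from hm]; exact h
    exact_mod_cast hm'
  have h15 : m ≤ 15 := by nlinarith [sq_nonneg (m - 15)]
  have h15' : -15 ≤ m := by nlinarith [sq_nonneg (m + 15)]
  interval_cases m <;> omega

noncomputable def gg : ℚ[X] := X ^ 3 - 4 * X + 1

lemma gg_monic : gg.Monic := by unfold gg; monicity!

lemma gg_natDegree : gg.natDegree = 3 := by unfold gg; compute_degree!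



lemma gg_irred : Irreducible gg := by
  rw [Polynomial.irreducible_iff_roots_eq_zero_of_degree_le_three (by rw [gg_natDegree]; norm_num)
    (by rw [gg_natDegree])]
  rw [Multiset.eq_zero_iff_forall_notMem]
  intro r hr
  rw [mem_roots gg_monic.ne_zero] at hr
  have : r ^ 3 - 4 * r + 1 = 0 := by
    have := hr
    unfold gg IsRoot at this
    simpa using this
  exact cubic_no_rat_root r this

instance : IsSplittingField ℚ SplF gg :=
  Polynomial.IsSplittingField.splittingField (X ^ 3 - 4 * X + 1 : ℚ[X])

instance : FiniteDimensional ℚ SplF :=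
  inferInstanceAs (FiniteDimensional ℚ (X ^ 3 - 4 * X + 1 : ℚ[X]).SplittingField)

instance : CharZero SplF := charZero_of_injective_algebraMap (algebraMap ℚ SplF).injective

instance : NumberField SplF := ⟨⟩

lemma exists_roots : ∃ a b c : SplF, gg.map (algebraMap ℚ SplF) = (X - C a) * ((X - C b) * (X - C c)) := by
  have hsp : (gg.map (algebraMap ℚ SplF)).Splits :=
    IsSplittingField.splits SplF gg
  have hmono : (gg.map (algebraMap ℚ SplF)).Monic := gg_monic.map _
  have hcard : (gg.map (algebraMap ℚ SplF)).roots.card = 3 := by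
    rw [(splits_iff_card_roots).mp hsp, natDegree_map, gg_natDegree]
  obtain ⟨a, b, c, habc⟩ := Multiset.card_eq_three.mp hcard
  refine ⟨a, b, c, ?_⟩
  have := hsp.eq_prod_roots_of_monic hmono
  rw [habc] at this
  simpa [mul_assoc] using this

lemma eval_fac {a b c : SplF}
    (h : gg.map (algebraMap ℚ SplF) = (X - C a) * ((X - C b) * (X - C c))) (x : SplF) :
    x ^ 3 - 4 * x + 1 = (x - a) * ((x - b) * (x - c)) := by
  have := congrArg (eval x) h
  simp only [eval_mul, eval_sub, eval_X, eval_C] at this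
  rw [← this]
  unfold gg
  simp [eval_map, eval₂_add, eval₂_sub]

lemma vieta {a b c : SplF}
    (h : gg.map (algebraMap ℚ SplF) = (X - C a) * ((X - C b) * (X - C c))) :
    a + b + c = 0 ∧ a*b + a*c + b*c = -4 ∧ a*b*c = -1 := by
  have h0 := eval_fac h 0
  have h1 := eval_fac h 1
  have hm1 := eval_fac h (-1)
  refine ⟨?_, ?_, ?_⟩
  · linear_combination (1/2 : SplF) * h1 + (1/2 : SplF) * hm1 - h0
  · linear_combination (-1/2 : SplF) * h1 + (1/2 : SplF) * hm1
  · linear_combination h0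

lemma sq229_natDegree : (X ^ 2 - 229 : ℚ[X]).natDegree = 2 := by compute_degree!

lemma finrank_k (y : SplF) (hy : y ^ 2 = 229) :
    Module.finrank ℚ ↥(IntermediateField.adjoin ℚ {y}) = 2 := by
  have hyint : IsIntegral ℚ y := .of_finite ℚ y
  have hirr : Irreducible (X ^ 2 - 229 : ℚ[X]) := by
    rw [Polynomial.irreducible_iff_roots_eq_zero_of_degree_le_three
      (by rw [sq229_natDegree]) (by rw [sq229_natDegree]; norm_num)]
    rw [Multiset.eq_zero_iff_forall_notMem]
    intro r hr
    have hne : (X ^ 2 - 229 : ℚ[X]) ≠ 0 := by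
      intro h
      have := congrArg (eval 0) h
      norm_num at this
    rw [mem_roots hne] at hr
    have : r ^ 2 - 229 = 0 := by simpa [IsRoot] using hr
    exact no_rat_sqrt_229 r (by linarith)
  have hmp : minpoly ℚ y = X ^ 2 - 229 := by
    refine (minpoly.eq_of_irreducible_of_monic hirr ?_ (by monicity!)).symm
    simp only [map_sub, map_pow, aeval_X, map_ofNat]
    rw [hy]
    norm_num
  rw [IntermediateField.adjoin.finrank hyint, hmp, sq229_natDegree]

lemma gk_irred (y : SplF) (hy : y ^ 2 = 229) :
    Irreducible (gg.map (algebraMap ℚ ↥(IntermediateField.adjoin ℚ {y}))) := by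
  set k := IntermediateField.adjoin ℚ {y}
  have hnd : (gg.map (algebraMap ℚ ↥k)).natDegree = 3 := by
    rw [natDegree_map, gg_natDegree]
  rw [Polynomial.irreducible_iff_roots_eq_zero_of_degree_le_three (by rw [hnd]; norm_num)
    (by rw [hnd])]
  rw [Multiset.eq_zero_iff_forall_notMem]
  intro z hz
  rw [mem_roots (gg_monic.map _).ne_zero] at hz
  have hz' : aeval z gg = 0 := by
    rwa [IsRoot, eval_map, ← aeval_def] at hz
  have hmp : minpoly ℚ z = gg :=
    (minpoly.eq_of_irreducible_of_monic gg_irred hz' gg_monic).symm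
  have hdvd := minpoly.degree_dvd (x := z) (.of_finite ℚ z)
  rw [hmp, gg_natDegree, finrank_k y hy] at hdvd
  norm_num at hdvd

lemma root_cubic_eq {a b c : SplF} (hsum : a + b + c = 0)
    (hs2 : a*b + a*c + b*c = -4) (habc : a*b*c = -1) : a ^ 3 - 4 * a + 1 = 0 := by
  linear_combination a^2*hsum - a*hs2 + habc

lemma root_mem_integralClosure {a : SplF} (ha : a ^ 3 - 4 * a + 1 = 0) :
    a ∈ integralClosure ℤ SplF := by
  refine ⟨X ^ 3 - 4 * X + 1, cubic_int_monic, ?_⟩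
  simp only [eval₂_add, eval₂_sub, eval₂_pow, eval₂_mul, eval₂_X, eval₂_one, eval₂_ofNat]
  push_cast
  linear_combination ha

lemma deriv_mem_P (y a b c : SplF) (hy : y ^ 2 = 229)
    (hfac : gg.map (algebraMap ℚ SplF) = (X - C a) * ((X - C b) * (X - C c)))
    (hsum : a + b + c = 0) (hs2 : a*b + a*c + b*c = -4) (habc : a*b*c = -1)
    (P : Ideal (𝓞 SplF))
    (hdiff : differentIdeal (𝓞 ↥(IntermediateField.adjoin ℚ {y})) (𝓞 SplF) ≤ P)
    (u : 𝓞 SplF) (hu : (u : SplF) = 3 * a ^ 2 - 4) : u ∈ P := by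
  set k := IntermediateField.adjoin ℚ {y} with hk
  have ha : a ^ 3 - 4 * a + 1 = 0 := root_cubic_eq hsum hs2 habc
  have haI : a ∈ integralClosure ℤ SplF := root_mem_integralClosure ha
  have hint_a : IsIntegral ↥k a := .of_finite _ _
  -- minimal polynomial of `a` over `k`
  have hgk : minpoly ↥k a = gg.map (algebraMap ℚ ↥k) := by
    refine (minpoly.eq_of_irreducible_of_monic (gk_irred y hy) ?_ (gg_monic.map _)).symm
    rw [aeval_map_algebraMap]
    show aeval a gg = 0
    unfold gg
    simp only [map_add, map_sub, map_pow, aeval_X, map_mul, map_one, map_ofNat]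
    linear_combination ha
  -- `k ⟮a⟯ = ⊤`
  set T := IntermediateField.adjoin ↥k {a} with hT
  have haT : a ∈ T := IntermediateField.mem_adjoin_simple_self _ a
  have hyT : y ∈ T := by
    have hyk : y ∈ k := IntermediateField.mem_adjoin_simple_self ℚ y
    exact T.algebraMap_mem ⟨y, hyk⟩
  have hprod : (a - b) * (a - c) = 3 * a ^ 2 - 4 := by
    linear_combination hs2 - 2*a*hsum
  have hD : ((a-b)*(a-c)*(b-c))^2 = y^2 := by
    linear_combination
      ((a+b+c)*(a*b+a*c+b*c+4)^2 - 8*(a+b+c)*(a*b+a*c+b*c+4) + 16*(a+b+c)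
        - 4*(a+b+c)^2*(a*b*c+1) + 4*(a+b+c)^2 + 18*(a*b+a*c+b*c+4)*(a*b*c+1)
        - 18*(a*b+a*c+b*c+4) - 72*(a*b*c+1) + 72) * hsum
      + (-4*(a*b+a*c+b*c+4)^2 + 48*(a*b+a*c+b*c+4) - 192) * hs2
      + (-27*(a*b*c+1) + 54) * habc - hy
  have hDy : (a-b)*(a-c)*(b-c) = y ∨ (a-b)*(a-c)*(b-c) = -y := by
    have h0 : ((a-b)*(a-c)*(b-c) - y)*((a-b)*(a-c)*(b-c) + y) = 0 := by
      linear_combination hD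
    rcases mul_eq_zero.mp h0 with h | h
    · exact Or.inl (sub_eq_zero.mp h)
    · exact Or.inr (eq_neg_of_add_eq_zero_left h)
  have h3a : (3 * a ^ 2 - 4 : SplF) ≠ 0 := by
    intro h
    have hy0 : y ^ 2 = 0 := by
      rw [← hD, mul_pow, hprod, h]
      ring
    rw [hy] at hy0
    norm_num at hy0
  have h3aT : (3 * a ^ 2 - 4 : SplF) ∈ T := by
    have haa : a ^ 2 ∈ T := by rw [sq]; exact T.mul_mem haT haT
    refine T.sub_mem (T.mul_mem ?_ haa) ?_
    · exact_mod_cast T.natCast_mem 3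
    · exact_mod_cast T.natCast_mem 4
  have h2T : (2 : SplF) ∈ T := by exact_mod_cast T.natCast_mem 2
  have hbc : b - c ∈ T := by
    rcases hDy with h | h
    · have hb : b - c = y / (3 * a ^ 2 - 4) := by
        rw [eq_div_iff h3a]
        linear_combination h - (b-c)*hprod
      rw [hb]; exact T.div_mem hyT h3aT
    · have hb : b - c = -y / (3 * a ^ 2 - 4) := by
        rw [eq_div_iff h3a]
        linear_combination h - (b-c)*hprod
      rw [hb]; exact T.div_mem (T.neg_mem hyT) h3aT
  have hbT : b ∈ T := by
    have hb : b = (-a + (b - c)) / 2 := by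
      rw [eq_div_iff (two_ne_zero (α := SplF))]
      linear_combination hsum
    rw [hb]; exact T.div_mem (T.add_mem (T.neg_mem haT) hbc) h2T
  have hcT : c ∈ T := by
    have hc : c = (-a - (b - c)) / 2 := by
      rw [eq_div_iff (two_ne_zero (α := SplF))]
      linear_combination hsum
    rw [hc]; exact T.div_mem (T.sub_mem (T.neg_mem haT) hbc) h2T
  have hTtop : ∀ x : SplF, x ∈ T := by
    intro x
    have hx : x ∈ Algebra.adjoin ℚ (gg.rootSet SplF) := by
      rw [Polynomial.IsSplittingField.adjoin_rootSet SplF gg]; trivial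
    have hsub : Algebra.adjoin ℚ (gg.rootSet SplF) ≤ T.toSubalgebra.restrictScalars ℚ := by
      apply Algebra.adjoin_le
      intro z hz
      rw [Polynomial.mem_rootSet] at hz
      have hz3 : z ^ 3 - 4 * z + 1 = 0 := by
        have := hz.2
        unfold gg at this
        simp only [map_add, map_sub, map_pow, aeval_X, map_mul, map_one, map_ofNat] at this
        linear_combination this
      have hzz : (z - a) * ((z - b) * (z - c)) = 0 := by
        rw [← eval_fac hfac z]; exact hz3
      have hmem : z ∈ T := by
        rcases mul_eq_zero.mp hzz with h | h
        · rw [sub_eq_zero.mp h]; exact haT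
        · rcases mul_eq_zero.mp h with h | h
          · rw [sub_eq_zero.mp h]; exact hbT
          · rw [sub_eq_zero.mp h]; exact hcT
      exact hmem
    exact hsub hx
  have hadj : Algebra.adjoin ↥k {a} = ⊤ := by
    rw [← IntermediateField.adjoin_simple_toSubalgebra_of_isAlgebraic hint_a.isAlgebraic]
    have : T = ⊤ := by
      ext x
      simp only [IntermediateField.mem_top, iff_true]
      exact hTtop x
    rw [← hT, this, IntermediateField.top_toSubalgebra]
  -- instances
  haveI : Module.IsTorsionFree (𝓞 ↥k) (𝓞 SplF) := by
    refine Module.isTorsionFree_iff_algebraMap_injective.mpr ?_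
    have h4 : Function.Injective (algebraMap (𝓞 ↥k) SplF) := by
      rw [IsScalarTower.algebraMap_eq (𝓞 ↥k) ↥k SplF]
      exact (algebraMap ↥k SplF).injective.comp (FaithfulSMul.algebraMap_injective _ _)
    intro x1 x2 hx
    apply h4
    have := congrArg (algebraMap (𝓞 SplF) SplF) hx
    rwa [← IsScalarTower.algebraMap_apply, ← IsScalarTower.algebraMap_apply] at this
  set at' : 𝓞 SplF := (⟨a, haI⟩ : 𝓞 SplF) with hat
  have hadj' : Algebra.adjoin ↥k {algebraMap (𝓞 SplF) SplF at'} = ⊤ := by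
    rw [hat, RingOfIntegers.map_mk]
    exact hadj
  have hmem := aeval_derivative_mem_differentIdeal (𝓞 ↥k) ↥k SplF at' hadj'
  have hAx : IsIntegral (𝓞 ↥k) at' := IsIntegralClosure.isIntegral (𝓞 ↥k) SplF at'
  have hval : (algebraMap (𝓞 SplF) SplF) ((aeval at') (derivative (minpoly (𝓞 ↥k) at')))
      = 3 * a ^ 2 - 4 := by
    have h1 : (algebraMap (𝓞 SplF) SplF) ((aeval at') (derivative (minpoly (𝓞 ↥k) at')))
        = aeval (algebraMap (𝓞 SplF) SplF at') (derivative (minpoly (𝓞 ↥k) at')) :=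
      (Polynomial.aeval_algebraMap_apply SplF at' _).symm
    have hmin : (minpoly (𝓞 ↥k) at').map (algebraMap (𝓞 ↥k) ↥k)
        = minpoly ↥k (algebraMap (𝓞 SplF) SplF at') :=
      (minpoly.isIntegrallyClosed_eq_field_fractions ↥k SplF hAx).symm
    rw [h1, ← aeval_map_algebraMap ↥k, ← derivative_map, hmin, hat,
      RingOfIntegers.map_mk, hgk, derivative_map, aeval_map_algebraMap]
    unfold gg
    simp [map_ofNat]
    norm_num
  have hu' : u = (aeval at') (derivative (minpoly (𝓞 ↥k) at')) := by
    apply RingOfIntegers.ext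
    rw [hu]
    exact hval.symm
  rw [hu']
  exact hdiff hmem

theorem splittingField_unramified_over_sqrt229
    (y : SplF) (hy : y ^ 2 = 229)
    (p : Ideal (𝓞 ↥(IntermediateField.adjoin ℚ {y})))
    (hp_bot : p ≠ ⊥) (hp : p.IsPrime)
    (P : Ideal (𝓞 SplF)) (hP : P.IsPrime)
    (hPp : Ideal.comap
      (algebraMap (𝓞 ↥(IntermediateField.adjoin ℚ {y})) (𝓞 SplF)) P = p) :
    Ideal.ramificationIdx' p P = 1 := by
  set f := algebraMap (𝓞 ↥(IntermediateField.adjoin ℚ {y})) (𝓞 SplF) with hf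
  -- instances
  haveI : Module.IsTorsionFree (𝓞 ↥(IntermediateField.adjoin ℚ {y})) (𝓞 SplF) := by
    refine Module.isTorsionFree_iff_algebraMap_injective.mpr ?_
    have h4 : Function.Injective (algebraMap (𝓞 ↥(IntermediateField.adjoin ℚ {y})) SplF) := by
      rw [IsScalarTower.algebraMap_eq (𝓞 ↥(IntermediateField.adjoin ℚ {y})) ↥(IntermediateField.adjoin ℚ {y}) SplF]
      exact (algebraMap ↥(IntermediateField.adjoin ℚ {y}) SplF).injective.comp (FaithfulSMul.algebraMap_injective _ _)
    intro x1 x2 hx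
    apply h4
    have := congrArg (algebraMap (𝓞 SplF) SplF) hx
    rwa [← IsScalarTower.algebraMap_apply, ← IsScalarTower.algebraMap_apply] at this
  have hinj : Function.Injective f := FaithfulSMul.algebraMap_injective _ _
  haveI : Module.Finite (𝓞 ↥(IntermediateField.adjoin ℚ {y})) (𝓞 SplF) :=
    Module.Finite.of_restrictScalars_finite ℤ _ _
  haveI hpm : p.IsMaximal := hp.isMaximal hp_bot
  -- basic facts on the ramification index
  have hle : Ideal.map f p ≤ P := by
    rw [← hPp]
    exact Ideal.map_comap_le
  have hmapne : Ideal.map f p ≠ ⊥ := by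
    obtain ⟨x, hxp, hx0⟩ := Submodule.exists_mem_ne_zero_of_ne_bot hp_bot
    intro hbot
    have hfx : f x ∈ Ideal.map f p := Ideal.mem_map_of_mem f hxp
    rw [hbot, Ideal.mem_bot] at hfx
    exact hx0 (by apply hinj; rwa [map_zero])
  have hne : Ideal.ramificationIdx' p P ≠ 0 :=
    Ideal.IsDedekindDomain.ramificationIdx'_ne_zero hmapne hP hle
  -- now suppose the index is at least 2
  by_contra hcon
  set e := Ideal.ramificationIdx' p P with he
  have h2le : 2 ≤ e := by omega
  have hdvd : P ^ e ∣ Ideal.map f p :=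
    Ideal.dvd_iff_le.mpr Ideal.le_pow_ramificationIdx'
  have hdiffdvd : P ^ (e - 1) ∣
      differentIdeal (𝓞 ↥(IntermediateField.adjoin ℚ {y})) (𝓞 SplF) :=
    pow_sub_one_dvd_differentIdeal_aux (𝓞 ↥(IntermediateField.adjoin ℚ {y})) ↥(IntermediateField.adjoin ℚ {y}) SplF P hne hp_bot hdvd
  have hPdvd : P ∣ differentIdeal (𝓞 ↥(IntermediateField.adjoin ℚ {y})) (𝓞 SplF) :=
    dvd_trans (dvd_pow_self P (by omega)) hdiffdvd
  have hdiff : differentIdeal (𝓞 ↥(IntermediateField.adjoin ℚ {y})) (𝓞 SplF) ≤ P := Ideal.le_of_dvd hPdvd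
  -- the roots of the cubic
  obtain ⟨a, b, c, hfac⟩ := exists_roots
  obtain ⟨hsum, hs2, habc⟩ := vieta hfac
  -- variants for the other two roots
  have hfacb : gg.map (algebraMap ℚ SplF) = (X - C b) * ((X - C a) * (X - C c)) := by
    rw [hfac]; ring
  have hfacc : gg.map (algebraMap ℚ SplF) = (X - C c) * ((X - C a) * (X - C b)) := by
    rw [hfac]; ring
  have hsumb : b + a + c = 0 := by linear_combination hsum
  have hs2b : b*a + b*c + a*c = -4 := by linear_combination hs2
  have habcb : b*a*c = -1 := by linear_combination habc
  have hsumc : c + a + b = 0 := by linear_combination hsum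
  have hs2c : c*a + c*b + a*b = -4 := by linear_combination hs2
  have habcc : c*a*b = -1 := by linear_combination habc
  -- integral elements
  have ha3 := root_cubic_eq hsum hs2 habc
  have hb3 := root_cubic_eq hsumb hs2b habcb
  have hc3 := root_cubic_eq hsumc hs2c habcc
  set at' : 𝓞 SplF := ⟨a, root_mem_integralClosure ha3⟩ with hat
  set bt' : 𝓞 SplF := ⟨b, root_mem_integralClosure hb3⟩ with hbt
  set ct' : 𝓞 SplF := ⟨c, root_mem_integralClosure hc3⟩ with hct
  -- membership of the 3θ² - 4 in P
  have hua : ((3*at'^2 - 4 : 𝓞 SplF) : SplF) = 3*a^2 - 4 := by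
    show algebraMap (𝓞 SplF) SplF _ = _
    rw [map_sub, map_mul, map_pow, map_ofNat, map_ofNat, hat, RingOfIntegers.map_mk]
  have hub : ((3*bt'^2 - 4 : 𝓞 SplF) : SplF) = 3*b^2 - 4 := by
    show algebraMap (𝓞 SplF) SplF _ = _
    rw [map_sub, map_mul, map_pow, map_ofNat, map_ofNat, hbt, RingOfIntegers.map_mk]
  have huc : ((3*ct'^2 - 4 : 𝓞 SplF) : SplF) = 3*c^2 - 4 := by
    show algebraMap (𝓞 SplF) SplF _ = _
    rw [map_sub, map_mul, map_pow, map_ofNat, map_ofNat, hct, RingOfIntegers.map_mk]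
  have hA : 3*at'^2 - 4 ∈ P := deriv_mem_P y a b c hy hfac hsum hs2 habc P hdiff _ hua
  have hB : 3*bt'^2 - 4 ∈ P := deriv_mem_P y b a c hy hfacb hsumb hs2b habcb P hdiff _ hub
  have hC : 3*ct'^2 - 4 ∈ P := deriv_mem_P y c a b hy hfacc hsumc hs2c habcc P hdiff _ huc
  -- symmetric function relations in the ring of integers
  have hsumO : at' + bt' + ct' = 0 := by
    apply RingOfIntegers.ext
    show algebraMap (𝓞 SplF) SplF _ = algebraMap (𝓞 SplF) SplF _
    rw [map_add, map_add, map_zero, hat, hbt, hct]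
    rw [RingOfIntegers.map_mk, RingOfIntegers.map_mk, RingOfIntegers.map_mk]
    exact hsum
  have hs2O : at'*bt' + at'*ct' + bt'*ct' = -4 := by
    apply RingOfIntegers.ext
    show algebraMap (𝓞 SplF) SplF _ = algebraMap (𝓞 SplF) SplF _
    rw [map_add, map_add, map_mul, map_mul, map_mul, map_neg, map_ofNat, hat, hbt, hct]
    rw [RingOfIntegers.map_mk, RingOfIntegers.map_mk, RingOfIntegers.map_mk]
    exact hs2
  have habcO : at'*bt'*ct' = -1 := by
    apply RingOfIntegers.ext
    show algebraMap (𝓞 SplF) SplF _ = algebraMap (𝓞 SplF) SplF _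
    rw [map_mul, map_mul, map_neg, map_one, hat, hbt, hct]
    rw [RingOfIntegers.map_mk, RingOfIntegers.map_mk, RingOfIntegers.map_mk]
    exact habc
  -- derive a contradiction
  have habsurd : (1 : 𝓞 SplF) ∈ P → False := by
    intro h1
    exact hP.ne_top ((Ideal.eq_top_iff_one P).mpr h1)
  have h12 : (12 : 𝓞 SplF) ∈ P := by
    have h := P.add_mem (P.add_mem hA hB) hC
    have heq : (3*at'^2-4) + (3*bt'^2-4) + (3*ct'^2-4) = (12 : 𝓞 SplF) := by
      linear_combination (3*(at'+bt'+ct'))*hsumO - 6*hs2O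
    rwa [heq] at h
  have h223 : ((2:𝓞 SplF)*(2*3)) ∈ P := by
    rwa [show ((2:𝓞 SplF)*(2*3)) = 12 by norm_num]
  have h23 : (2:𝓞 SplF) ∈ P ∨ (3:𝓞 SplF) ∈ P := by
    rcases hP.mem_or_mem h223 with h | h
    · exact Or.inl h
    · rcases hP.mem_or_mem h with h | h
      · exact Or.inl h
      · exact Or.inr h
  rcases h23 with h2 | h3
  · -- 2 ∈ P
    have h4 : (4 : 𝓞 SplF) ∈ P := by
      have := P.mul_mem_left 2 h2
      rwa [show (2:𝓞 SplF)*2 = 4 by norm_num] at this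
    have key : ∀ t : 𝓞 SplF, (3*t^2 - 4) ∈ P → (3:𝓞 SplF) ∈ P ∨ t ∈ P := by
      intro t ht
      have h3t : (3:𝓞 SplF)*(t*t) ∈ P := by
        have := P.add_mem ht h4
        rwa [show 3*t^2-4+4 = 3*(t*t) by ring] at this
      rcases hP.mem_or_mem h3t with h | h
      · exact Or.inl h
      · rcases hP.mem_or_mem h with h | h <;> exact Or.inr h
    have h32 : (3:𝓞 SplF) ∈ P → False := by
      intro h3
      refine habsurd ?_
      have := P.sub_mem h3 h2
      rwa [show (3:𝓞 SplF)-2 = 1 by norm_num] at this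
    rcases key at' hA with h3 | hatP
    · exact h32 h3
    rcases key bt' hB with h3 | hbtP
    · exact h32 h3
    rcases key ct' hC with h3 | hctP
    · exact h32 h3
    refine habsurd ?_
    have hm1 : (-1 : 𝓞 SplF) ∈ P := by
      rw [← habcO]
      exact P.mul_mem_right _ (P.mul_mem_right _ hatP)
    have := P.neg_mem hm1
    rwa [neg_neg] at this
  · -- 3 ∈ P
    have h4 : (4 : 𝓞 SplF) ∈ P := by
      have := P.sub_mem (P.mul_mem_left (at'*at') h3) hA
      rwa [show at'*at'*3 - (3*at'^2-4) = 4 by ring] at this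
    refine habsurd ?_
    have := P.sub_mem h4 h3
    rwa [show (4:𝓞 SplF)-3 = 1 by norm_num] at this
end
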